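/- A directed crossover can planarly simulate an undirected crossover: wiring four directed crossovers as in the construction yields a planar system with four external locations, alternating in cyclic order, in which the agent can traverse between each pair of opposite external locations in both directions and cannot traverse between adjacent external locations. -/

import Mathlib

/-- Planar-gadget data on state type `St` and location type `Lc`: a set of traversals
together with a cyclic order of the locations, given as a list (up to rotation and
reflection) containing each location exactly once. -/
structure PGData (St Lc : Type) where
  trav : (St × Lc) → (St × Lc) → Prop
  cyc : List Lc
  cyc_nodup : cyc.Nodup
  cyc_complete : ∀ l, l ∈ cyc

/-- A planar gadget: finite state and location sets plus planar gadget data. -/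
structure PlanarGadget where
  State : Type
  Loc : Type
  stateFin : Fintype State
  locFin : Fintype Loc
  data : PGData State Loc

/-- Make a planar gadget from its data. -/
def mkPG {St Lc : Type} [Fintype St] [Fintype Lc] (d : PGData St Lc) : PlanarGadget :=
  ⟨St, Lc, inferInstance, inferInstance, d⟩

open Classical in
/-- Update the state of one gadget instance in a global state. -/
noncomputable def updState {ι St : Type} (σg : ι → St) (i : ι) (s : St) : ι → St :=
  fun j => if j = i then s else σg j

/-- The cyclic successor of `a` in the list `L`. -/
noncomputable def cycNext {α : Type} (L : List α) (a : α) : α :=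
  letI := Classical.decEq α
  L.getD ((L.idxOf a + 1) % L.length) a

/-- Number of orbits of the function `f` (the equivalence closure of `f x = y`). -/
noncomputable def orbCount {D : Type} (f : D → D) : ℕ :=
  Nat.card (Quotient (⟨Relation.EqvGen fun x y => f x = y,
    Relation.EqvGen.is_equivalence _⟩ : Setoid D))

/-- Number of joint orbits of two functions `f`, `g`. -/
noncomputable def orbCount2 {D : Type} (f g : D → D) : ℕ :=
  Nat.card (Quotient (⟨Relation.EqvGen fun x y => f x = y ∨ g x = y,
    Relation.EqvGen.is_equivalence _⟩ : Setoid D))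
/-- A system of copies of gadgets from the family `fam` (all on the same state and
location types), drawn in the plane, presented as a combinatorial map:
* a finite set `ι` of gadget instances (instance `i` being a copy of `fam (kind i)`) and
  a finite set `J` of junction vertices (points where connections meet freely);
* a finite set `D` of darts with a rotation permutation `σ` and a fixed-point-free edge
  involution `τ` (each connection contributes a pair of darts swapped by `τ`);
* every location of every instance carries exactly one dart, the rotation at an instance
  follows the gadget's cyclic order of locations, and the rotation at a junction is a
  single (arbitrary) cycle on its darts. -/
structure MSystem {St Lc κ : Type} (fam : κ → PGData St Lc) where
  ι : Type
  instFin : Fintype ι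
  kind : ι → κ
  J : Type
  juncFin : Fintype J
  D : Type
  dartFin : Fintype D
  σ : Equiv.Perm D
  τ : Equiv.Perm D
  τ_invol : ∀ d, τ (τ d) = d
  τ_nofix : ∀ d, τ d ≠ d
  vert : D → ι ⊕ J
  port : D → Lc
  port_unique : ∀ (i : ι) (l : Lc), ∃! d : D, vert d = Sum.inl i ∧ port d = l
  σ_vert : ∀ d, vert (σ d) = vert d
  σ_port : ∀ (d : D) (i : ι), vert d = Sum.inl i →
    port (σ d) = cycNext (fam (kind i)).cyc (port d)
  σ_junc : ∀ (d d' : D) (j : J), vert d = Sum.inr j → vert d' = Sum.inr j →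
    Relation.EqvGen (fun x y => σ x = y) d d'

namespace MSystem

variable {St Lc κ : Type} {fam : κ → PGData St Lc}

/-- The position (instance-location or junction) at which a dart is attached. -/
def endpt (S : MSystem fam) (d : S.D) : (S.ι × Lc) ⊕ S.J :=
  match S.vert d with
  | Sum.inl i => Sum.inl (i, S.port d)
  | Sum.inr j => Sum.inr j

/-- The face permutation of the combinatorial map. -/
def facePerm (S : MSystem fam) : S.D → S.D := fun d => S.σ (S.τ d)

/-- Planarity of the combinatorial map, via the Euler characteristic:
`V + F = E + 2 C` (vertices + faces = edges + 2 · connected components). -/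
def IsPlanar (S : MSystem fam) : Prop :=
  orbCount (fun d => S.σ d) + orbCount S.facePerm =
    orbCount (fun d => S.τ d) + 2 * orbCount2 (fun d => S.σ d) (fun d => S.τ d)

/-- `d` is the dart at the instance-location `x`. -/
def IsDartAt (S : MSystem fam) (x : S.ι × Lc) (d : S.D) : Prop :=
  S.vert d = Sum.inl x.1 ∧ S.port d = x.2

end MSystem

/-- A single move of the agent in a planar system: a traversal inside one instance
(changing only that instance's state), or a free move along a connection (an edge of
the map, between the endpoints of a dart and its `τ`-partner). -/
inductive MStep {St Lc κ : Type} (fam : κ → PGData St Lc) (S : MSystem fam) :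
    ((S.ι → St) × ((S.ι × Lc) ⊕ S.J)) → ((S.ι → St) × ((S.ι × Lc) ⊕ S.J)) → Prop
  | trav {σg : S.ι → St} {i : S.ι} {a b : Lc} {s' : St} :
      (fam (S.kind i)).trav (σg i, a) (s', b) →
      MStep fam S (σg, Sum.inl (i, a)) (updState σg i s', Sum.inl (i, b))
  | wire {σg : S.ι → St} (d : S.D) :
      MStep fam S (σg, S.endpt d) (σg, S.endpt (S.τ d))

/-- The planar system `S`, with external locations `ext` and state encoding `enc`,
is a planar simulation of the planar gadget `H`:
* `ext` identifies the locations of `H` injectively with instance-locations of `S` and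
  `enc` encodes the states of `H` injectively as global states of `S`;
* the underlying combinatorial map is planar;
* the reachability behavior between external locations in encoded global states is
  exactly the transitive closure of `H`;
* all external locations lie on one common face of the map, and the cyclic order in
  which that face visits them is the cyclic order of the locations of `H`
  (up to rotation and reflection). -/
def IsPlanarSimulation {St Lc κ : Type} (fam : κ → PGData St Lc) (H : PlanarGadget)
    (S : MSystem fam) (ext : H.Loc → S.ι × Lc) (enc : H.State → (S.ι → St)) : Prop :=
  Function.Injective ext ∧ Function.Injective enc ∧ S.IsPlanar ∧
  (∀ s s' a b,
      Relation.ReflTransGen (MStep fam S) (enc s, Sum.inl (ext a)) (enc s', Sum.inl (ext b)) ↔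
      Relation.ReflTransGen H.data.trav (s, a) (s', b)) ∧
  (∃ r : Bool, ∀ (a : H.Loc) (da db : S.D),
      S.IsDartAt (ext a) da →
      S.IsDartAt (ext (cycNext (if r then H.data.cyc else H.data.cyc.reverse) a)) db →
      ∃ k, 0 < k ∧ S.facePerm^[k] da = db ∧
        ∀ j, 0 < j → j < k → ∀ c, ¬ S.IsDartAt (ext c) (S.facePerm^[j] da))

/-- The family `fam` of planar gadgets can planarly simulate the planar gadget `H`. -/
def PlanarlySimulatesFam {St Lc κ : Type} (fam : κ → PGData St Lc)
    (H : PlanarGadget) : Prop :=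
  ∃ (S : MSystem fam) (ext : H.Loc → S.ι × Lc) (enc : H.State → (S.ι → St)),
    IsPlanarSimulation fam H S ext enc

/-- The planar gadget `G` can planarly simulate the planar gadget `H`. -/
def PlanarlySimulates (G H : PlanarGadget) : Prop :=
  PlanarlySimulatesFam (fun _ : Unit => G.data) H

/-! ### Gadgets.  For 2-state gadgets, state `true` = open, `false` = closed.
A direction flag `true` means the corresponding tunnel is directed. -/

/-- Locations of a door with an opening tunnel. -/
inductive DoorLoc | O0 | O1 | T0 | T1 | C0 | C1
deriving DecidableEq

instance instFintypeDoorLoc : Fintype DoorLoc :=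
  ⟨[DoorLoc.O0, DoorLoc.O1, DoorLoc.T0, DoorLoc.T1, DoorLoc.C0, DoorLoc.C1].toFinset, by intro x; cases x <;> decide⟩

/-- Traversals of a door with an opening tunnel; `dO`, `dT`, `dC` record whether the
opening, traverse, closing tunnels are directed. -/
def doorTrav (dO dT dC : Bool) : (Bool × DoorLoc) → (Bool × DoorLoc) → Prop := fun x y =>
  (x.2 = DoorLoc.O0 ∧ y = (true, DoorLoc.O1)) ∨
  (dO = false ∧ x.2 = DoorLoc.O1 ∧ y = (true, DoorLoc.O0)) ∨
  (x.1 = true ∧ x.2 = DoorLoc.T0 ∧ y = (true, DoorLoc.T1)) ∨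
  (dT = false ∧ x.1 = true ∧ x.2 = DoorLoc.T1 ∧ y = (true, DoorLoc.T0)) ∨
  (x.2 = DoorLoc.C0 ∧ y = (false, DoorLoc.C1)) ∨
  (dC = false ∧ x.2 = DoorLoc.C1 ∧ y = (false, DoorLoc.C0))

/-- Locations of an open-optional door (opening port `O`). -/
inductive ODoorLoc | O | T0 | T1 | C0 | C1
deriving DecidableEq

instance instFintypeODoorLoc : Fintype ODoorLoc :=
  ⟨[ODoorLoc.O, ODoorLoc.T0, ODoorLoc.T1, ODoorLoc.C0, ODoorLoc.C1].toFinset, by intro x; cases x <;> decide⟩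

/-- Traversals of an open-optional door: a visit to its opening port `O` sets the state
to open. -/
def openOptDoorTrav (dT dC : Bool) : (Bool × ODoorLoc) → (Bool × ODoorLoc) → Prop := fun x y =>
  (x.2 = ODoorLoc.O ∧ y = (true, ODoorLoc.O)) ∨
  (x.1 = true ∧ x.2 = ODoorLoc.T0 ∧ y = (true, ODoorLoc.T1)) ∨
  (dT = false ∧ x.1 = true ∧ x.2 = ODoorLoc.T1 ∧ y = (true, ODoorLoc.T0)) ∨
  (x.2 = ODoorLoc.C0 ∧ y = (false, ODoorLoc.C1)) ∨
  (dC = false ∧ x.2 = ODoorLoc.C1 ∧ y = (false, ODoorLoc.C0))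

/-- A diode: a 1-state gadget with one always-traversable directed tunnel. -/
inductive DiodeLoc | inp | out
deriving DecidableEq

instance instFintypeDiodeLoc : Fintype DiodeLoc :=
  ⟨[DiodeLoc.inp, DiodeLoc.out].toFinset, by intro x; cases x <;> decide⟩

def pDiode : PlanarGadget :=
  mkPG (⟨fun x y => x.2 = DiodeLoc.inp ∧ y.2 = DiodeLoc.out,
    [DiodeLoc.inp, DiodeLoc.out], by decide, by decide⟩ : PGData Unit DiodeLoc)

/-- Locations of an open-required normal self-closing door. -/
inductive SCDLoc | O0 | O1 | T0 | T1
deriving DecidableEq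

instance instFintypeSCDLoc : Fintype SCDLoc :=
  ⟨[SCDLoc.O0, SCDLoc.O1, SCDLoc.T0, SCDLoc.T1].toFinset, by intro x; cases x <;> decide⟩

/-- Open-required normal self-closing door: opening tunnel `O` (always traversable, sets
the state open), self-closing tunnel `T` (traversable exactly when open, sets closed). -/
def nSCDTrav (dO dT : Bool) : (Bool × SCDLoc) → (Bool × SCDLoc) → Prop := fun x y =>
  (x.2 = SCDLoc.O0 ∧ y = (true, SCDLoc.O1)) ∨
  (dO = false ∧ x.2 = SCDLoc.O1 ∧ y = (true, SCDLoc.O0)) ∨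
  (x.1 = true ∧ x.2 = SCDLoc.T0 ∧ y = (false, SCDLoc.T1)) ∨
  (dT = false ∧ x.1 = true ∧ x.2 = SCDLoc.T1 ∧ y = (false, SCDLoc.T0))

/-- Locations of an open-optional normal self-closing door. -/
inductive OOSCDLoc | O | T0 | T1
deriving DecidableEq

instance instFintypeOOSCDLoc : Fintype OOSCDLoc :=
  ⟨[OOSCDLoc.O, OOSCDLoc.T0, OOSCDLoc.T1].toFinset, by intro x; cases x <;> decide⟩

/-- Open-optional normal self-closing door: opening port `O` (visit sets the state open),
self-closing tunnel `T` (traversable exactly when open, sets the state closed). -/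
def ooSCDTrav (dT : Bool) : (Bool × OOSCDLoc) → (Bool × OOSCDLoc) → Prop := fun x y =>
  (x.2 = OOSCDLoc.O ∧ y = (true, OOSCDLoc.O)) ∨
  (x.1 = true ∧ x.2 = OOSCDLoc.T0 ∧ y = (false, OOSCDLoc.T1)) ∨
  (dT = false ∧ x.1 = true ∧ x.2 = OOSCDLoc.T1 ∧ y = (false, OOSCDLoc.T0))

/-- The planar directed open-optional normal self-closing door (a 3-location gadget,
whose cyclic order is unique up to rotation and reflection). -/
def pSCD : PlanarGadget :=
  mkPG (⟨ooSCDTrav true, [OOSCDLoc.O, OOSCDLoc.T0, OOSCDLoc.T1],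
    by decide, by decide⟩ : PGData Bool OOSCDLoc)

/-- Locations of a symmetric self-closing door. -/
inductive SymSCDLoc | A0 | A1 | B0 | B1
deriving DecidableEq

instance instFintypeSymSCDLoc : Fintype SymSCDLoc :=
  ⟨[SymSCDLoc.A0, SymSCDLoc.A1, SymSCDLoc.B0, SymSCDLoc.B1].toFinset, by intro x; cases x <;> decide⟩

/-- Symmetric self-closing door: self-opening tunnel `A` (traversable exactly when
closed, sets open), self-closing tunnel `B` (traversable exactly when open, sets closed). -/
def symSCDTrav (dA dB : Bool) : (Bool × SymSCDLoc) → (Bool × SymSCDLoc) → Prop := fun x y =>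
  (x.1 = false ∧ x.2 = SymSCDLoc.A0 ∧ y = (true, SymSCDLoc.A1)) ∨
  (dA = false ∧ x.1 = false ∧ x.2 = SymSCDLoc.A1 ∧ y = (true, SymSCDLoc.A0)) ∨
  (x.1 = true ∧ x.2 = SymSCDLoc.B0 ∧ y = (false, SymSCDLoc.B1)) ∨
  (dB = false ∧ x.1 = true ∧ x.2 = SymSCDLoc.B1 ∧ y = (false, SymSCDLoc.B0))

/-- Locations of a crossover: tunnels `X0–X1` and `Y0–Y1`. -/
inductive XLoc | X0 | Y0 | X1 | Y1
deriving DecidableEq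

instance instFintypeXLoc : Fintype XLoc :=
  ⟨[XLoc.X0, XLoc.Y0, XLoc.X1, XLoc.Y1].toFinset, by intro x; cases x <;> decide⟩

/-- The cyclic order of a crossover: the locations of its two tunnels alternate. -/
def crossCyc : List XLoc := [XLoc.X0, XLoc.Y0, XLoc.X1, XLoc.Y1]

/-- The directed crossover. -/
def pDirCrossover : PlanarGadget :=
  mkPG (⟨fun x y => (x.2 = XLoc.X0 ∧ y.2 = XLoc.X1) ∨ (x.2 = XLoc.Y0 ∧ y.2 = XLoc.Y1),
    crossCyc, by decide, by decide⟩ : PGData Unit XLoc)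

/-- The undirected crossover. -/
def pUndirCrossover : PlanarGadget :=
  mkPG (⟨fun x y =>
      (x.2 = XLoc.X0 ∧ y.2 = XLoc.X1) ∨ (x.2 = XLoc.X1 ∧ y.2 = XLoc.X0) ∨
      (x.2 = XLoc.Y0 ∧ y.2 = XLoc.Y1) ∨ (x.2 = XLoc.Y1 ∧ y.2 = XLoc.Y0),
    crossCyc, by decide, by decide⟩ : PGData Unit XLoc)

/-- Locations of a tripwire lock: lock tunnel `L0→L1`, tripwire tunnel `W0→W1`. -/
inductive TWLoc | L0 | L1 | W0 | W1
deriving DecidableEq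

instance instFintypeTWLoc : Fintype TWLoc :=
  ⟨[TWLoc.L0, TWLoc.L1, TWLoc.W0, TWLoc.W1].toFinset, by intro x; cases x <;> decide⟩

/-- Traversals of the directed tripwire lock: the lock tunnel is traversable in exactly
one state (`true`) and does not change the state; the tripwire tunnel is always
traversable and toggles the state. -/
def twlTrav : (Bool × TWLoc) → (Bool × TWLoc) → Prop := fun x y =>
  (x.1 = true ∧ x.2 = TWLoc.L0 ∧ y = (true, TWLoc.L1)) ∨
  (x.2 = TWLoc.W0 ∧ y = (!x.1, TWLoc.W1))

/-- The parallel directed tripwire lock: two non-crossing tunnels oriented the same way. -/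
def parTWLData : PGData Bool TWLoc :=
  ⟨twlTrav, [TWLoc.L0, TWLoc.L1, TWLoc.W1, TWLoc.W0], by decide, by decide⟩

/-- The antiparallel directed tripwire lock: two non-crossing tunnels oriented oppositely. -/
def apTWLData : PGData Bool TWLoc :=
  ⟨twlTrav, [TWLoc.L0, TWLoc.L1, TWLoc.W0, TWLoc.W1], by decide, by decide⟩

def parTWL : PlanarGadget := mkPG parTWLData
def apTWL : PlanarGadget := mkPG apTWLData

/-- Locations of a tripwire-lock-tripwire: tripwires `Wa0→Wa1` and `Wb0→Wb1` on the
outside and lock `L0→L1` between them. -/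
inductive TLTLoc | Wa0 | Wa1 | L0 | L1 | Wb0 | Wb1
deriving DecidableEq

instance instFintypeTLTLoc : Fintype TLTLoc :=
  ⟨[TLTLoc.Wa0, TLTLoc.Wa1, TLTLoc.L0, TLTLoc.L1, TLTLoc.Wb0, TLTLoc.Wb1].toFinset, by intro x; cases x <;> decide⟩

/-- Traversals of the directed tripwire-lock-tripwire: both tripwires are always
traversable and toggle the state; the lock is traversable exactly in state `true`
and does not change the state. -/
def tltTrav : (Bool × TLTLoc) → (Bool × TLTLoc) → Prop := fun x y =>
  (x.2 = TLTLoc.Wa0 ∧ y = (!x.1, TLTLoc.Wa1)) ∨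
  (x.1 = true ∧ x.2 = TLTLoc.L0 ∧ y = (true, TLTLoc.L1)) ∨
  (x.2 = TLTLoc.Wb0 ∧ y = (!x.1, TLTLoc.Wb1))

/-- The directed tripwire-lock-tripwire with antiparallel tripwires: three non-crossing
tunnels, the two tripwires on the outside oriented oppositely, the lock in the middle. -/
def pTLT : PlanarGadget :=
  mkPG (⟨tltTrav,
    [TLTLoc.Wa0, TLTLoc.Wa1, TLTLoc.L1, TLTLoc.Wb0, TLTLoc.Wb1, TLTLoc.L0],
    by decide, by decide⟩ : PGData Bool TLTLoc)

/-! ### The twelve planar fully directed doors without internal crossings,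
named by the clockwise cyclic order of their locations, entrances uppercase and exits
lowercase (`O`/`o` opening, `T`/`t` traverse, `C`/`c` closing); opening tunnels with
adjacent endpoints are merged into a single opening port `O`. -/

/-- A fully directed door with an opening port, in a given planar embedding. -/
def portCaseDoor (c : List ODoorLoc) (h1 : c.Nodup) (h2 : ∀ l, l ∈ c) : PlanarGadget :=
  mkPG (⟨openOptDoorTrav true true, c, h1, h2⟩ : PGData Bool ODoorLoc)

/-- A fully directed door with an opening tunnel, in a given planar embedding. -/
def tunnelCaseDoor (c : List DoorLoc) (h1 : c.Nodup) (h2 : ∀ l, l ∈ c) : PlanarGadget :=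
  mkPG (⟨doorTrav true true true, c, h1, h2⟩ : PGData Bool DoorLoc)

/-- Case 1: the OcCTt door. -/
def case1Door : PlanarGadget :=
  portCaseDoor [ODoorLoc.O, ODoorLoc.C1, ODoorLoc.C0, ODoorLoc.T0, ODoorLoc.T1]
    (by decide) (by decide)

/-- Case 2: the OTtCc door. -/
def case2Door : PlanarGadget :=
  portCaseDoor [ODoorLoc.O, ODoorLoc.T0, ODoorLoc.T1, ODoorLoc.C0, ODoorLoc.C1]
    (by decide) (by decide)

/-- Case 3: the OCcTt door. -/
def case3Door : PlanarGadget :=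
  portCaseDoor [ODoorLoc.O, ODoorLoc.C0, ODoorLoc.C1, ODoorLoc.T0, ODoorLoc.T1]
    (by decide) (by decide)

/-- Case 4: the OTtcC door. -/
def case4Door : PlanarGadget :=
  portCaseDoor [ODoorLoc.O, ODoorLoc.T0, ODoorLoc.T1, ODoorLoc.C1, ODoorLoc.C0]
    (by decide) (by decide)

/-- Case 5: the OtToCc door. -/
def case5Door : PlanarGadget :=
  tunnelCaseDoor [DoorLoc.O0, DoorLoc.T1, DoorLoc.T0, DoorLoc.O1, DoorLoc.C0, DoorLoc.C1]
    (by decide) (by decide)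

/-- Case 6: the OTtoCc door. -/
def case6Door : PlanarGadget :=
  tunnelCaseDoor [DoorLoc.O0, DoorLoc.T0, DoorLoc.T1, DoorLoc.O1, DoorLoc.C0, DoorLoc.C1]
    (by decide) (by decide)

/-- Case 7: the OtTocC door. -/
def case7Door : PlanarGadget :=
  tunnelCaseDoor [DoorLoc.O0, DoorLoc.T1, DoorLoc.T0, DoorLoc.O1, DoorLoc.C1, DoorLoc.C0]
    (by decide) (by decide)

/-- The cyclic order of the Case-8 OTtocC door. -/
def case8Cyc : List DoorLoc :=
  [DoorLoc.O0, DoorLoc.T0, DoorLoc.T1, DoorLoc.O1, DoorLoc.C1, DoorLoc.C0]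

/-- Case 8: the OTtocC door. -/
def case8Door : PlanarGadget := tunnelCaseDoor case8Cyc (by decide) (by decide)

/-- Case 9: the OtcCT door. -/
def case9Door : PlanarGadget :=
  portCaseDoor [ODoorLoc.O, ODoorLoc.T1, ODoorLoc.C1, ODoorLoc.C0, ODoorLoc.T0]
    (by decide) (by decide)

/-- Case 10: the OTcCt door. -/
def case10Door : PlanarGadget :=
  portCaseDoor [ODoorLoc.O, ODoorLoc.T0, ODoorLoc.C1, ODoorLoc.C0, ODoorLoc.T1]
    (by decide) (by decide)

/-- Case 11: the OCTtc door. -/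
def case11Door : PlanarGadget :=
  portCaseDoor [ODoorLoc.O, ODoorLoc.C0, ODoorLoc.T0, ODoorLoc.T1, ODoorLoc.C1]
    (by decide) (by decide)

/-- Case 12: the OcTtC door. -/
def case12Door : PlanarGadget :=
  portCaseDoor [ODoorLoc.O, ODoorLoc.C1, ODoorLoc.T0, ODoorLoc.T1, ODoorLoc.C0]
    (by decide) (by decide)

/-- Two lists are equal as cyclic orders (up to rotation and reflection). -/
def CycEquiv {α : Type} (L M : List α) : Prop :=
  ∃ n : ℕ, M = L.rotate n ∨ M = L.reverse.rotate n

/-- In the cyclic order `c`, the pair `{a, a'}` interleaves with the pair `{b, b'}`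
(i.e. the tunnel `a–a'` crosses the tunnel `b–b'` in any planar drawing). -/
def Interleaved {α : Type} (c : List α) (a a' b b' : α) : Prop :=
  letI := Classical.decEq α
  ∃ n : ℕ,
    (c.rotate n).idxOf a = 0 ∧
    (((c.rotate n).idxOf b < (c.rotate n).idxOf a' ∧
      (c.rotate n).idxOf a' < (c.rotate n).idxOf b') ∨
     ((c.rotate n).idxOf b' < (c.rotate n).idxOf a' ∧
      (c.rotate n).idxOf a' < (c.rotate n).idxOf b))

/-!
Put four directed crossovers `0, 1, 3, 2` in a ring and join each to its two neighbours by
two wires. Then the directed tunnels chain into two disjoint directed cycles, each passing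
through every crossover once: the `X`-loop `1 → 3 → 2 → 0 → 1`, carrying the external
locations `X0` and `X1`, and the `Y`-loop `3 → 1 → 0 → 2 → 3`, carrying `Y0` and `Y1`.
Going around a loop connects its two external locations in both directions, and since every
move keeps the agent on its loop, locations on different loops are never connected. The
resulting map has 4 vertices, 8 edges and 6 faces and is connected, so it is planar by
Euler's formula, and the external locations appear in the cyclic order `X0 Y0 X1 Y1`
around a face.
-/

open Relation Equiv

section Orbits

variable {D : Type}

theorem eqvGen_apply_eq_eq_sameCycle [Finite D] (σ : Perm D) :
    EqvGen (fun x y => σ x = y) = σ.SameCycle := by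
  ext x y
  constructor
  · intro h
    induction h with
    | rel _ _ hxy => exact ⟨1, by rwa [zpow_one]⟩
    | refl => exact Perm.SameCycle.refl σ _
    | symm _ _ _ ih => exact ih.symm
    | trans _ _ _ _ _ ih₁ ih₂ => exact ih₁.trans ih₂
  · intro h
    obtain ⟨n, rfl⟩ := h.exists_nat_pow_eq
    clear h
    induction n with
    | zero => exact EqvGen.refl x
    | succ n ih => exact ih.trans _ _ _ (EqvGen.rel _ _ (by rw [pow_succ', Perm.mul_apply]))

instance Equiv.Perm.fintypeQuotientSameCycle [Fintype D] [DecidableEq D] (σ : Perm D) :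
    Fintype (Quotient (Perm.SameCycle.setoid σ)) :=
  @Quotient.fintype D _ _ (inferInstanceAs (DecidableRel σ.SameCycle))

theorem orbCount_eq_card_quotient_sameCycle [Fintype D] [DecidableEq D] (σ : Perm D) :
    orbCount σ = Fintype.card (Quotient (Perm.SameCycle.setoid σ)) := by
  have hsetoid : (⟨EqvGen fun x y => σ x = y, EqvGen.is_equivalence _⟩ : Setoid D) =
      Perm.SameCycle.setoid σ :=
    Setoid.ext fun x y => Iff.of_eq (congrFun₂ (eqvGen_apply_eq_eq_sameCycle σ) x y)
  rw [orbCount, hsetoid, Nat.card_eq_fintype_card]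

def bfsStep [DecidableEq D] (f g : D → D) (s : Finset D) : Finset D :=
  s ∪ s.image f ∪ s.image g

theorem eqvGen_of_mem_iterate_bfsStep [DecidableEq D] (f g : D → D) (d₀ : D) :
    ∀ n, ∀ d ∈ (bfsStep f g)^[n] {d₀}, EqvGen (fun x y => f x = y ∨ g x = y) d₀ d
  | 0, d, hd => by rw [Finset.mem_singleton.1 hd]; exact EqvGen.refl d₀
  | n + 1, d, hd => by
    rw [Function.iterate_succ_apply', bfsStep] at hd
    simp only [Finset.mem_union, Finset.mem_image] at hd
    have ih := eqvGen_of_mem_iterate_bfsStep f g d₀ n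
    rcases hd with (hd | ⟨x, hx, rfl⟩) | ⟨x, hx, rfl⟩
    · exact ih d hd
    · exact (ih x hx).trans _ _ _ (EqvGen.rel _ _ (Or.inl rfl))
    · exact (ih x hx).trans _ _ _ (EqvGen.rel _ _ (Or.inr rfl))

theorem orbCount2_eq_one_of_forall_mem_iterate_bfsStep [DecidableEq D] (f g : D → D) (d₀ : D)
    (n : ℕ) (h : ∀ d, d ∈ (bfsStep f g)^[n] {d₀}) : orbCount2 f g = 1 := by
  have hconn := fun d => eqvGen_of_mem_iterate_bfsStep f g d₀ n d (h d)
  rw [orbCount2, Nat.card_eq_one_iff_unique]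
  refine ⟨⟨Quotient.ind fun a => Quotient.ind fun b => Quotient.sound ?_⟩, ⟨⟦d₀⟧⟩⟩
  exact (hconn a).symm.trans _ _ _ (hconn b)

end Orbits

theorem cycNext_eq_formPerm {α : Type} [DecidableEq α] {L : List α} (hL : L.Nodup) {a : α}
    (ha : a ∈ L) : cycNext L a = L.formPerm a := by
  have hi : L.idxOf a < L.length := List.idxOf_lt_length_iff.2 ha
  conv_rhs => rw [← List.getElem_idxOf hi]
  rw [List.formPerm_apply_getElem L hL _ hi, cycNext,
    List.getD_eq_getElem _ _ (Nat.mod_lt _ (by omega))]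
  congr
  exact Subsingleton.elim _ _

namespace MSystem

variable {St Lc κ ι : Type} {fam : κ → PGData St Lc}

abbrev ofWiring [Fintype ι] [Fintype Lc] [DecidableEq Lc] (kind : ι → κ)
    (w : ι × Lc → ι × Lc) (hw : Function.Involutive w) (hw_ne : ∀ d, w d ≠ d) :
    MSystem fam where
  ι := ι
  instFin := inferInstance
  kind := kind
  J := Empty
  juncFin := inferInstance
  D := ι × Lc
  dartFin := inferInstance
  σ := Equiv.prodCongrRight fun i => (fam (kind i)).cyc.formPerm
  τ := hw.toPerm
  τ_invol := hw
  τ_nofix := hw_ne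
  vert d := Sum.inl d.1
  port := Prod.snd
  port_unique i l :=
    ⟨(i, l), ⟨rfl, rfl⟩, fun _ ⟨h₁, h₂⟩ => Prod.ext (Sum.inl.inj h₁) h₂⟩
  σ_vert _ := rfl
  σ_port d i h := by
    cases Sum.inl.inj h
    exact (cycNext_eq_formPerm (fam _).cyc_nodup ((fam _).cyc_complete _)).symm
  σ_junc _ _ j := j.elim

theorem isDartAt_ofWiring_iff [Fintype ι] [Fintype Lc] [DecidableEq Lc] {kind : ι → κ}
    {w : ι × Lc → ι × Lc} {hw : Function.Involutive w} {hw_ne : ∀ d, w d ≠ d}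
    {x d : ι × Lc} : (ofWiring (fam := fam) kind w hw hw_ne).IsDartAt x d ↔ d = x :=
  ⟨fun ⟨h₁, h₂⟩ => Prod.ext (Sum.inl.inj h₁) h₂, fun h => h ▸ ⟨rfl, rfl⟩⟩

end MSystem

theorem MStep.trav_of_subsingleton {St Lc κ : Type} [Subsingleton St] {fam : κ → PGData St Lc}
    {S : MSystem fam} {σg : S.ι → St} {i : S.ι} {a b : Lc} {s' : St}
    (h : (fam (S.kind i)).trav (σg i, a) (s', b)) :
    MStep fam S (σg, Sum.inl (i, a)) (σg, Sum.inl (i, b)) := by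
  simpa only [Subsingleton.elim (updState σg i s') σg] using MStep.trav h

theorem Relation.ReflTransGen.apply_eq_of_forall {α β : Type} {r : α → α → Prop}
    (f : α → β) (hf : ∀ a b, r a b → f a = f b) {a b : α} (h : ReflTransGen r a b) :
    f a = f b := by
  induction h with
  | refl => rfl
  | tail _ hbc ih => exact ih.trans (hf _ _ hbc)

def crossoverWiring : Fin 4 × XLoc → Fin 4 × XLoc
  | (0, .X0) => (2, .Y1)
  | (0, .Y0) => (1, .X1)
  | (0, .X1) => (1, .Y0)
  | (0, .Y1) => (2, .X0)
  | (1, .X0) => (3, .Y1)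
  | (1, .Y0) => (0, .X1)
  | (1, .X1) => (0, .Y0)
  | (1, .Y1) => (3, .X0)
  | (2, .X0) => (0, .Y1)
  | (2, .Y0) => (3, .X1)
  | (2, .X1) => (3, .Y0)
  | (2, .Y1) => (0, .X0)
  | (3, .X0) => (1, .Y1)
  | (3, .Y0) => (2, .X1)
  | (3, .X1) => (2, .Y0)
  | (3, .Y1) => (1, .X0)

abbrev crossoverSystem : MSystem (fun _ : Unit => pDirCrossover.data) :=
  .ofWiring (Lc := XLoc) (fun _ => ()) crossoverWiring
    (by unfold Function.Involutive; decide) (by decide)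

def crossoverExt : XLoc → Fin 4 × XLoc
  | .X0 => (1, .Y1)
  | .Y0 => (3, .Y0)
  | .X1 => (2, .Y1)
  | .Y1 => (0, .Y0)

theorem crossoverSystem_isPlanar : crossoverSystem.IsPlanar := by
  show orbCount crossoverSystem.σ + orbCount ⇑(crossoverSystem.σ * crossoverSystem.τ) =
    orbCount crossoverSystem.τ + 2 * orbCount2 crossoverSystem.σ crossoverSystem.τ
  rw [orbCount_eq_card_quotient_sameCycle, orbCount_eq_card_quotient_sameCycle,
    orbCount_eq_card_quotient_sameCycle,
    orbCount2_eq_one_of_forall_mem_iterate_bfsStep _ _ (0, .X0) 6 (by decide)]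
  decide

/-- Crossovers `0` and `3` carry the `X`-loop on their `X`-tunnels, crossovers `1` and `2`
on their `Y`-tunnels. -/
def onXLoop (d : Fin 4 × XLoc) : Bool :=
  decide (d.1 = 0 ∨ d.1 = 3) == decide (d.2 = .X0 ∨ d.2 = .X1)

theorem MStep.onXLoop_eq
    {u v : (crossoverSystem.ι → Unit) × ((crossoverSystem.ι × XLoc) ⊕ Empty)}
    (h : MStep _ crossoverSystem u v) :
    Sum.elim onXLoop Empty.elim u.2 = Sum.elim onXLoop Empty.elim v.2 := by
  have tunnelX : ∀ i, onXLoop (i, .X0) = onXLoop (i, .X1) := by decide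
  have tunnelY : ∀ i, onXLoop (i, .Y0) = onXLoop (i, .Y1) := by decide
  have wire : ∀ d, onXLoop d = onXLoop (crossoverWiring d) := by decide
  cases h with
  | @trav _ i _ _ _ h =>
    rcases h with ⟨rfl, rfl⟩ | ⟨rfl, rfl⟩
    exacts [tunnelX i, tunnelY i]
  | wire d => exact wire d

instance : Subsingleton pDirCrossover.State := inferInstanceAs (Subsingleton Unit)

theorem crossoverSystem_reach_of_trav (σg : crossoverSystem.ι → Unit) {x y : Unit × XLoc}
    (h : pUndirCrossover.data.trav x y) :
    ReflTransGen (MStep _ crossoverSystem)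
      (σg, .inl (crossoverExt x.2)) (σg, .inl (crossoverExt y.2)) := by
  have tunnelX (i : Fin 4) : MStep _ crossoverSystem (σg, .inl (i, .X0)) (σg, .inl (i, .X1)) :=
    .trav_of_subsingleton (s' := ()) (Or.inl ⟨rfl, rfl⟩)
  have tunnelY (i : Fin 4) : MStep _ crossoverSystem (σg, .inl (i, .Y0)) (σg, .inl (i, .Y1)) :=
    .trav_of_subsingleton (s' := ()) (Or.inr ⟨rfl, rfl⟩)
  have wire (d : Fin 4 × XLoc) :
      MStep _ crossoverSystem (σg, .inl d) (σg, .inl (crossoverWiring d)) :=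
    MStep.wire (S := crossoverSystem) d
  obtain ⟨hx, hy⟩ | ⟨hx, hy⟩ | ⟨hx, hy⟩ | ⟨hx, hy⟩ := h <;> rw [hx, hy]
  · exact .head (wire (1, .Y1)) <| .head (tunnelX 3) <|
      .head (wire (3, .X1)) <| .single (tunnelY 2)
  · exact .head (wire (2, .Y1)) <| .head (tunnelX 0) <|
      .head (wire (0, .X1)) <| .single (tunnelY 1)
  · exact .head (tunnelY 3) <| .head (wire (3, .Y1)) <|
      .head (tunnelX 1) <| .single (wire (1, .X1))
  · exact .head (tunnelY 0) <| .head (wire (0, .Y1)) <|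
      .head (tunnelX 2) <| .single (wire (2, .X1))

theorem eq_or_undirCrossover_trav_of_onXLoop_eq {a b : XLoc}
    (h : onXLoop (crossoverExt a) = onXLoop (crossoverExt b)) :
    a = b ∨ pUndirCrossover.data.trav ((), a) ((), b) := by
  revert a b
  unfold pUndirCrossover mkPG
  decide

theorem crossoverSystem_reach_iff {σg σg' : crossoverSystem.ι → Unit} (s s' : Unit)
    (a b : XLoc) :
    ReflTransGen (MStep _ crossoverSystem)
        (σg, .inl (crossoverExt a)) (σg', .inl (crossoverExt b)) ↔
      ReflTransGen pUndirCrossover.data.trav (s, a) (s', b) := by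
  rw [Subsingleton.elim σg' σg]
  constructor
  · intro h
    have hloop := h.apply_eq_of_forall (fun u => Sum.elim onXLoop Empty.elim u.2)
      fun _ _ => MStep.onXLoop_eq
    rcases eq_or_undirCrossover_trav_of_onXLoop_eq hloop with rfl | htrav
    · exact Subsingleton.elim s s' ▸ .refl
    · exact .single htrav
  · exact fun h => ReflTransGen.lift' (fun x : Unit × XLoc => (σg, Sum.inl (crossoverExt x.2)))
      (fun _ _ => crossoverSystem_reach_of_trav σg) _ _ h

theorem crossoverSystem_facePerm_crossoverExt (a : XLoc) :
    crossoverSystem.facePerm (crossoverExt a) = crossoverExt (cycNext crossCyc a) := by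
  rw [cycNext_eq_formPerm (by decide : crossCyc.Nodup) ((by decide : ∀ l, l ∈ crossCyc) a)]
  revert a
  decide

theorem crossoverSystem_face (a : XLoc) (da db : crossoverSystem.D)
    (hda : crossoverSystem.IsDartAt (crossoverExt a) da)
    (hdb : crossoverSystem.IsDartAt (crossoverExt (cycNext crossCyc a)) db) :
    ∃ k, 0 < k ∧ crossoverSystem.facePerm^[k] da = db ∧
      ∀ j, 0 < j → j < k → ∀ c, ¬ crossoverSystem.IsDartAt (crossoverExt c)
        (crossoverSystem.facePerm^[j] da) := by
  obtain rfl := (MSystem.isDartAt_ofWiring_iff (Lc := XLoc)).1 hda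
  obtain rfl := (MSystem.isDartAt_ofWiring_iff (Lc := XLoc)).1 hdb
  exact ⟨1, one_pos, crossoverSystem_facePerm_crossoverExt a, fun j hj₀ hj₁ => by omega⟩

theorem crossoverExt_injective : Function.Injective crossoverExt := by
  unfold Function.Injective
  decide

/-- A directed crossover can planarly simulate an undirected crossover:
wiring four directed crossovers as in the construction yields a planar system (with four
external locations alternating in cyclic order) whose behavior is exactly that of the
undirected crossover. -/
theorem directed_crossover_planarly_simulates_undirected_crossover :
    ∃ (S : MSystem (fun _ : Unit => pDirCrossover.data))
      (ext : pUndirCrossover.Loc → S.ι × pDirCrossover.Loc)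
      (enc : pUndirCrossover.State → (S.ι → pDirCrossover.State)),
      Nat.card S.ι = 4 ∧
      IsPlanarSimulation (fun _ : Unit => pDirCrossover.data) pUndirCrossover S ext enc :=
  ⟨crossoverSystem, crossoverExt, fun _ _ => (), Nat.card_fin 4, crossoverExt_injective,
    fun _ _ _ => Subsingleton.elim (α := Unit) _ _, crossoverSystem_isPlanar,
    crossoverSystem_reach_iff, true, crossoverSystem_face⟩
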